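/- Let (X,u) and (Y,v) be closure spaces. Define τ to be the collection of all subsets G of Y^X such that for every f ∈ G and every net (f_λ)_{λ∈Λ} in Y^X satisfying limsup_Λ f_λ⁻¹(B) ⊆ f⁻¹(v(B)) for every B ⊆ Y, there exists λ₀ ∈ Λ with f_λ ∈ G for all λ ≥ λ₀. Then τ is a topology on Y^X, τ (i.e., its Kuratowski closure operator) is proper, and every proper topology on Y^X is coarser than τ; consequently a subset G of Y^X is open in the finest proper topology if and only if G ∈ τ. -/

import Mathlib

open Set

universe u

/-- A Čech closure operator on a type `X`: it satisfies (C1) `cl ∅ = ∅`,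
(C2) `A ⊆ cl A` and (C3) `cl (A ∪ B) = cl A ∪ cl B`.  The pair `(X, u)` is a
(Čech) closure space. -/
structure CechClosure (X : Type u) : Type u where
  cl : Set X → Set X
  cl_empty : cl ∅ = ∅
  subset_cl : ∀ A : Set X, A ⊆ cl A
  cl_union : ∀ A B : Set X, cl (A ∪ B) = cl A ∪ cl B

namespace CechClosure

variable {X Y Z : Type u}

/-- The interior operator of a closure space: `int_u A = X \ u (X \ A)`. -/
def interior (u : CechClosure X) (A : Set X) : Set X := (u.cl Aᶜ)ᶜ

/-- `U` is a neighbourhood of `x` in `(X, u)` if `x ∈ int_u U`. -/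
def Nhd (u : CechClosure X) (x : X) (U : Set X) : Prop := x ∈ u.interior U

theorem interior_subset (u : CechClosure X) (A : Set X) : u.interior A ⊆ A := by
  intro x hx
  by_contra h
  exact hx (u.subset_cl _ h)

theorem interior_inter (u : CechClosure X) (A B : Set X) :
    u.interior (A ∩ B) = u.interior A ∩ u.interior B := by
  unfold interior
  rw [compl_inter, u.cl_union, compl_union]

theorem nhd_univ (u : CechClosure X) (x : X) : u.Nhd x univ := by
  simp [Nhd, interior, u.cl_empty]

theorem nhd_inter (u : CechClosure X) {x : X} {A B : Set X} (hA : u.Nhd x A)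
    (hB : u.Nhd x B) : u.Nhd x (A ∩ B) := by
  have h := u.interior_inter A B
  unfold Nhd at *
  rw [h]
  exact ⟨hA, hB⟩

/-- A function `f : (X, u) → (Y, v)` between closure spaces is continuous if
`f (u A) ⊆ v (f A)` for every `A ⊆ X`. -/
def Continuous (u : CechClosure X) (v : CechClosure Y) (f : X → Y) : Prop :=
  ∀ A : Set X, f '' u.cl A ⊆ v.cl (f '' A)

/-- The product of two closure spaces: `(z, x)` is in the closure of `S` iff every
"rectangle" `W ×ˢ U` of neighbourhoods `W` of `z` and `U` of `x` meets `S`. -/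
def prod (w : CechClosure Z) (u : CechClosure X) : CechClosure (Z × X) where
  cl S := {p | ∀ W U, w.Nhd p.1 W → u.Nhd p.2 U → (W ×ˢ U ∩ S).Nonempty}
  cl_empty := by
    ext p
    simp only [mem_setOf_eq, mem_empty_iff_false, iff_false]
    intro h
    rcases h univ univ (w.nhd_univ _) (u.nhd_univ _) with ⟨q, -, hq⟩
    exact hq
  subset_cl := by
    intro S p hp W U hW hU
    exact ⟨p, ⟨⟨w.interior_subset _ hW, u.interior_subset _ hU⟩, hp⟩⟩
  cl_union := by
    intro S T
    ext p
    simp only [mem_setOf_eq, mem_union]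
    constructor
    · intro h
      by_contra hc
      push_neg at hc
      obtain ⟨h1, h2⟩ := hc
      simp only [← Set.not_nonempty_iff_eq_empty] at h1 h2
      obtain ⟨W1, U1, hW1, hU1, hne1⟩ := h1
      obtain ⟨W2, U2, hW2, hU2, hne2⟩ := h2
      rcases h (W1 ∩ W2) (U1 ∩ U2) (w.nhd_inter hW1 hW2) (u.nhd_inter hU1 hU2) with
        ⟨q, ⟨⟨hq1, hq2⟩, hqST⟩⟩
      rcases hqST with hqS | hqT
      · exact hne1 ⟨q, ⟨⟨hq1.1, hq2.1⟩, hqS⟩⟩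
      · exact hne2 ⟨q, ⟨⟨hq1.2, hq2.2⟩, hqT⟩⟩
    · rintro (h | h) W U hW hU
      · rcases h W U hW hU with ⟨q, hq1, hq2⟩
        exact ⟨q, hq1, Or.inl hq2⟩
      · rcases h W U hW hU with ⟨q, hq1, hq2⟩
        exact ⟨q, hq1, Or.inr hq2⟩

/-- `Y^X`: the type of continuous functions between the closure spaces
`(X, u)` and `(Y, v)`. -/
def ContMap (u : CechClosure X) (v : CechClosure Y) : Type u :=
  {f : X → Y // Continuous u v f}

/-- A closure operator `σ` on `Y^X` is proper (splitting) if for every closure space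
`(Z, w)`, continuity of `g : (Z, w) × (X, u) → (Y, v)` implies continuity of
`g* : (Z, w) → (Y^X, σ)`, where `g (z, x) = (g* z) x`. -/
def Proper (u : CechClosure X) (v : CechClosure Y) (σ : CechClosure (ContMap u v)) : Prop :=
  ∀ (Z : Type u) (w : CechClosure Z) (G : Z → ContMap u v),
    Continuous (w.prod u) v (fun p => (G p.1).1 p.2) → Continuous w σ G

/-- A closure operator `σ` on `Y^X` is admissible (jointly continuous) if for every closure
space `(Z, w)`, continuity of `g* : (Z, w) → (Y^X, σ)` implies continuity of
`g : (Z, w) × (X, u) → (Y, v)`, where `g (z, x) = (g* z) x`. -/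
def Admissible (u : CechClosure X) (v : CechClosure Y) (σ : CechClosure (ContMap u v)) : Prop :=
  ∀ (Z : Type u) (w : CechClosure Z) (G : Z → ContMap u v),
    Continuous w σ G → Continuous (w.prod u) v (fun p => (G p.1).1 p.2)

/-- A topological space regarded as a closure space via its (Kuratowski) closure operator. -/
def ofTop {Z : Type u} (t : TopologicalSpace Z) : CechClosure Z :=
  letI := t
  { cl := fun A => _root_.closure A
    cl_empty := closure_empty
    subset_cl := fun _ => subset_closure
    cl_union := fun _ _ => closure_union }

/-- `le` is the order relation of a directed set: a reflexive and transitive relation on a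
nonempty type in which every two elements have an upper bound. -/
structure IsDirectedOrder {Λ : Type*} (le : Λ → Λ → Prop) : Prop where
  refl : ∀ a, le a a
  trans : ∀ a b c, le a b → le b c → le a c
  directed : ∀ a b, ∃ c, le a c ∧ le b c
  nonempty : Nonempty Λ

/-- Convergence of a net `s : Λ → X` (with order `le` on `Λ`) to a point `x` in a closure
space `(X, u)`: every neighbourhood of `x` contains `s l` residually. -/
def NetConv (u : CechClosure X) {Λ : Type*} (le : Λ → Λ → Prop) (s : Λ → X) (x : X) : Prop :=
  ∀ U : Set X, u.Nhd x U → ∃ l₀, ∀ l, le l₀ l → s l ∈ U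

/-- The product order on `Λ × M`. -/
def prodLE {Λ M : Type*} (leΛ : Λ → Λ → Prop) (leM : M → M → Prop) :
    Λ × M → Λ × M → Prop :=
  fun p q => leΛ p.1 q.1 ∧ leM p.2 q.2

/-- A net `F : Λ → Y^X` converges continuously to `f ∈ Y^X` if for every `x ∈ X` and every
net `s : M → X` converging to `x` in `(X, u)`, the net `(l, m) ↦ (F l) (s m)` (indexed by
`Λ × M` with the product order) converges to `f x` in `(Y, v)`. -/
def ContConv (u : CechClosure X) (v : CechClosure Y) {Λ : Type u} (leΛ : Λ → Λ → Prop)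
    (F : Λ → ContMap u v) (f : ContMap u v) : Prop :=
  ∀ (M : Type u) (leM : M → M → Prop), IsDirectedOrder leM →
    ∀ (s : M → X) (x : X), NetConv u leM s x →
      NetConv v (prodLE leΛ leM) (fun p : Λ × M => (F p.1).1 (s p.2)) (f.1 x)

/-- The upper limit of a net `A : Λ → Set X` of subsets of a closure space `(X, u)`: the set
of points `x` such that for every `l₀` and every neighbourhood `U` of `x` there is `l ≥ l₀`
with `A l ∩ U ≠ ∅`. -/
def UpperLim (u : CechClosure X) {Λ : Type*} (le : Λ → Λ → Prop) (A : Λ → Set X) : Set X :=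
  {x | ∀ (l₀ : Λ) (U : Set X), u.Nhd x U → ∃ l, le l₀ l ∧ (A l ∩ U).Nonempty}

/-- `g : M → α` is a subnet of `f : Λ → α`: there is `φ : M → Λ` with `g = f ∘ φ` such that
`φ` is residually above any given index of `Λ`. -/
def IsSubnet {α : Type*} {Λ M : Type*} (leΛ : Λ → Λ → Prop) (leM : M → M → Prop)
    (f : Λ → α) (g : M → α) : Prop :=
  ∃ φ : M → Λ, (∀ m, g m = f (φ m)) ∧ ∀ l₀, ∃ m₀, ∀ m, leM m₀ m → leΛ l₀ (φ m)

end CechClosure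
namespace CechClosure

variable {X Y : Type u}

/-- The collection `τ` of all subsets `G` of `Y^X` such that for every `f ∈ G` and every
net `(f_λ)` in `Y^X` with `limsup_Λ f_λ⁻¹(B) ⊆ f⁻¹(v B)` for every `B ⊆ Y`, the net is
residually in `G`. -/
def tau (u : CechClosure X) (v : CechClosure Y) : Set (Set (ContMap u v)) :=
  {G | ∀ f ∈ G, ∀ (Λ : Type u) (leΛ : Λ → Λ → Prop), IsDirectedOrder leΛ →
    ∀ F : Λ → ContMap u v,
      (∀ B : Set Y, UpperLim u leΛ (fun l => (F l).1 ⁻¹' B) ⊆ f.1 ⁻¹' (v.cl B)) →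
      ∃ l₀, ∀ l, leΛ l₀ l → F l ∈ G}

/-!
If a net `(f_λ)` satisfies `limsup_Λ f_λ⁻¹(B) ⊆ f⁻¹(v B)` for all `B`, then the map
`(λ, x) ↦ f_λ x`, extended by `(∞, x) ↦ f x`, is continuous on `(Λ ∪ {∞}) × X`, where `∞` is
adherent to the cofinal subsets of `Λ`. For a proper topology the adjoint map `Λ ∪ {∞} → Y^X`
is then continuous, so `f` is adherent to every cofinal part of the net; taking the part
outside an open `G ∋ f` shows that the net is residually in `G`, i.e. `G ∈ τ`.
Conversely, if `g : Z × X → Y` is continuous and `z ∈ w A`, choose `a_W ∈ W ∩ A` for each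
neighbourhood `W` of `z`; the net `g*(a_W)` satisfies the upper-limit condition with respect to
`g*(z)`, so every member of `τ` containing `g*(z)` meets `g*(A)`: `τ` is proper.
-/

open scoped Topology

variable {Z : Type u}

theorem cl_mono (u : CechClosure X) {A B : Set X} (h : A ⊆ B) : u.cl A ⊆ u.cl B := by
  rw [← union_eq_self_of_subset_left h, u.cl_union]
  exact subset_union_left

theorem mem_cl_iff (u : CechClosure X) (T : Set X) (x : X) :
    x ∈ u.cl T ↔ ∀ U, u.Nhd x U → (U ∩ T).Nonempty := by
  constructor
  · intro hx U hU
    by_contra hUT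
    exact hU (cl_mono u (fun y hy hyU => hUT ⟨y, hyU, hy⟩) hx)
  · intro h
    by_contra hx
    obtain ⟨y, hyT, hy⟩ := h Tᶜ (by simpa [Nhd, interior] using hx)
    exact hyT hy

theorem continuous_iff_cl_preimage_subset {u : CechClosure X} {v : CechClosure Y} (f : X → Y) :
    Continuous u v f ↔ ∀ B, u.cl (f ⁻¹' B) ⊆ f ⁻¹' v.cl B := by
  constructor
  · intro hf B x hx
    exact cl_mono v (image_preimage_subset f B) (hf _ ⟨x, hx, rfl⟩)
  · rintro hf A _ ⟨x, hx, rfl⟩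
    exact hf (f '' A) (cl_mono u (subset_preimage_image f A) hx)

theorem mem_cl_of_mem_prod_cl {w : CechClosure Z} {u : CechClosure X} {S : Set (Z × X)}
    {z : Z} {x : X} (h : (z, x) ∈ (w.prod u).cl S) {W : Set Z} (hW : w.Nhd z W) :
    x ∈ u.cl {x' | ∃ z' ∈ W, (z', x') ∈ S} := by
  rw [mem_cl_iff]
  intro U hU
  obtain ⟨⟨z', x'⟩, ⟨hz', hx'⟩, hS⟩ := h W U hW hU
  exact ⟨x', hx', z', hz', hS⟩

def Residually {Λ : Type*} (le : Λ → Λ → Prop) (p : Λ → Prop) : Prop :=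
  ∃ l₀, ∀ l, le l₀ l → p l

def Cofinally {Λ : Type*} (le : Λ → Λ → Prop) (p : Λ → Prop) : Prop :=
  ∀ l₀, ∃ l, le l₀ l ∧ p l

section Directed

variable {Λ : Type*} {le : Λ → Λ → Prop} {p q : Λ → Prop}

theorem Cofinally.mono (hp : Cofinally le p) (hpq : ∀ l, p l → q l) : Cofinally le q :=
  fun l₀ => (hp l₀).imp fun l hl => ⟨hl.1, hpq l hl.2⟩

theorem IsDirectedOrder.residually_and (h : IsDirectedOrder le) (hp : Residually le p)
    (hq : Residually le q) : Residually le fun l => p l ∧ q l := by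
  obtain ⟨l₁, hl₁⟩ := hp
  obtain ⟨l₂, hl₂⟩ := hq
  obtain ⟨l₀, h₁, h₂⟩ := h.directed l₁ l₂
  exact ⟨l₀, fun l hl => ⟨hl₁ l (h.trans _ _ _ h₁ hl), hl₂ l (h.trans _ _ _ h₂ hl)⟩⟩

theorem IsDirectedOrder.cofinally_or (h : IsDirectedOrder le)
    (hpq : Cofinally le fun l => p l ∨ q l) : Cofinally le p ∨ Cofinally le q := by
  by_cases hp : Cofinally le p
  · exact Or.inl hp
  · right
    intro l₀
    obtain ⟨l₁, hl₁⟩ : ∃ l₁, ∀ l, le l₁ l → ¬p l := by simpa [Cofinally] using hp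
    obtain ⟨c, h₀c, h₁c⟩ := h.directed l₀ l₁
    obtain ⟨l, hcl, hl⟩ := hpq c
    exact ⟨l, h.trans _ _ _ h₀c hcl, hl.resolve_left (hl₁ l (h.trans _ _ _ h₁c hcl))⟩

end Directed

theorem isDirectedOrder_nhd (w : CechClosure Z) (z : Z) :
    IsDirectedOrder fun W W' : {W : Set Z // w.Nhd z W} => W'.1 ⊆ W.1 where
  refl _ := subset_rfl
  trans _ _ _ h₁ h₂ := h₂.trans h₁
  directed W W' := ⟨⟨W.1 ∩ W'.1, w.nhd_inter W.2 W'.2⟩, inter_subset_left, inter_subset_right⟩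
  nonempty := ⟨⟨univ, w.nhd_univ z⟩⟩

section WithLimit

variable {Λ : Type u} {le : Λ → Λ → Prop}

/-- `Λ ∪ {∞}`, with `∞ = none` adherent to the cofinal subsets of `Λ`. -/
def withLimit (h : IsDirectedOrder le) : CechClosure (Option Λ) where
  cl S := S ∪ {z | z = none ∧ Cofinally le fun l => some l ∈ S}
  cl_empty := by
    ext z
    simp only [mem_union, mem_ofPred_eq, mem_empty_iff_false, false_or, iff_false, not_and]
    rintro - hc
    obtain ⟨l₀⟩ := h.nonempty
    obtain ⟨l, -, hl⟩ := hc l₀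
    exact hl
  subset_cl _ := subset_union_left
  cl_union S T := by
    ext z
    constructor
    · rintro ((hS | hT) | ⟨rfl, hc⟩)
      · exact Or.inl (Or.inl hS)
      · exact Or.inr (Or.inl hT)
      · exact (h.cofinally_or hc).imp (fun hS => Or.inr ⟨rfl, hS⟩) fun hT => Or.inr ⟨rfl, hT⟩
    · rintro ((hS | ⟨rfl, hc⟩) | (hT | ⟨rfl, hc⟩))
      · exact Or.inl (Or.inl hS)
      · exact Or.inr ⟨rfl, hc.mono fun _ => Or.inl⟩
      · exact Or.inl (Or.inr hT)
      · exact Or.inr ⟨rfl, hc.mono fun _ => Or.inr⟩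

variable (h : IsDirectedOrder le)

theorem withLimit_nhd_some (l : Λ) : (withLimit h).Nhd (some l) {some l} := by
  simp [Nhd, interior, withLimit]

theorem withLimit_nhd_none (l₀ : Λ) :
    (withLimit h).Nhd none (insert none (some '' {l | le l₀ l})) := by
  rintro (hn | ⟨-, hc⟩)
  · exact hn (mem_insert none _)
  · obtain ⟨l, hl, hlW⟩ := hc l₀
    exact hlW (mem_insert_of_mem _ ⟨l, hl, rfl⟩)

theorem none_mem_withLimit_cl {p : Λ → Prop} (hp : Cofinally le p) :
    none ∈ (withLimit h).cl (some '' {l | p l}) :=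
  Or.inr ⟨rfl, hp.mono fun l hl => ⟨l, hl, rfl⟩⟩

end WithLimit

theorem univ_mem_tau (u : CechClosure X) (v : CechClosure Y) : univ ∈ tau u v := by
  intro _ _ _ _ h _ _
  obtain ⟨l₀⟩ := h.nonempty
  exact ⟨l₀, fun _ _ => mem_univ _⟩

theorem inter_mem_tau {u : CechClosure X} {v : CechClosure Y} {G₁ G₂ : Set (ContMap u v)}
    (h₁ : G₁ ∈ tau u v) (h₂ : G₂ ∈ tau u v) : G₁ ∩ G₂ ∈ tau u v :=
  fun f hf Λ le h F hF => h.residually_and (h₁ f hf.1 Λ le h F hF) (h₂ f hf.2 Λ le h F hF)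

theorem sUnion_mem_tau {u : CechClosure X} {v : CechClosure Y} {𝒢 : Set (Set (ContMap u v))}
    (h𝒢 : 𝒢 ⊆ tau u v) : ⋃₀ 𝒢 ∈ tau u v := by
  rintro f ⟨G, hG, hfG⟩ Λ le h F hF
  obtain ⟨l₀, hl₀⟩ := h𝒢 hG f hfG Λ le h F hF
  exact ⟨l₀, fun l hl => ⟨G, hG, hl₀ l hl⟩⟩

theorem isOpen_generateFrom_tau_iff {u : CechClosure X} {v : CechClosure Y}
    (G : Set (ContMap u v)) : IsOpen[TopologicalSpace.generateFrom (tau u v)] G ↔ G ∈ tau u v := by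
  let t : TopologicalSpace (ContMap u v) :=
    ⟨(· ∈ tau u v), univ_mem_tau u v, fun _ _ => inter_mem_tau, fun _ => sUnion_mem_tau⟩
  rw [show TopologicalSpace.generateFrom (tau u v) = t from
    TopologicalSpace.generateFrom_setOfPred_isOpen t]
  rfl

theorem upperLim_preimage_subset_of_continuous {u : CechClosure X} {v : CechClosure Y}
    {w : CechClosure Z} {g : Z → ContMap u v} (hg : Continuous (w.prod u) v fun p => (g p.1).1 p.2)
    {Λ : Type*} {le : Λ → Λ → Prop} {a : Λ → Z} {z : Z} (ha : NetConv w le a z) (B : Set Y) :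
    UpperLim u le (fun l => (g (a l)).1 ⁻¹' B) ⊆ (g z).1 ⁻¹' v.cl B := by
  intro x hx
  have hzx : (z, x) ∈ (w.prod u).cl ((fun p => (g p.1).1 p.2) ⁻¹' B) := by
    intro W U hW hU
    obtain ⟨l₀, hl₀⟩ := ha W hW
    obtain ⟨l, hl, x', hx'B, hx'U⟩ := hx l₀ U hU
    exact ⟨(a l, x'), ⟨hl₀ l hl, hx'U⟩, hx'B⟩
  exact (continuous_iff_cl_preimage_subset _).1 hg B hzx

theorem proper_tau (u : CechClosure X) (v : CechClosure Y) :
    Proper u v (ofTop (TopologicalSpace.generateFrom (tau u v))) := by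
  rintro Z w g hg A _ ⟨z, hz, rfl⟩
  let := TopologicalSpace.generateFrom (tau u v)
  show g z ∈ closure (g '' A)
  rw [mem_closure_iff]
  intro O hO hzO
  choose a haW haA using fun W : {W : Set Z // w.Nhd z W} => (mem_cl_iff w A z).1 hz W.1 W.2
  have ha : NetConv w (fun W W' : {W : Set Z // w.Nhd z W} => W'.1 ⊆ W.1) a z :=
    fun U hU => ⟨⟨U, hU⟩, fun W hW => hW (haW W)⟩
  obtain ⟨W₀, hW₀⟩ := (isOpen_generateFrom_tau_iff O).1 hO (g z) hzO _ _ (isDirectedOrder_nhd w z)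
    (fun W => g (a W)) (upperLim_preimage_subset_of_continuous hg ha)
  exact ⟨g (a W₀), hW₀ W₀ subset_rfl, a W₀, haA W₀, rfl⟩

theorem continuous_withLimit_prod {u : CechClosure X} {v : CechClosure Y} {Λ : Type u}
    {le : Λ → Λ → Prop} (h : IsDirectedOrder le) {F : Λ → ContMap u v} {f : ContMap u v}
    (hF : ∀ B : Set Y, UpperLim u le (fun l => (F l).1 ⁻¹' B) ⊆ f.1 ⁻¹' v.cl B) :
    Continuous ((withLimit h).prod u) v fun p => (p.1.elim f F).1 p.2 := by
  rw [continuous_iff_cl_preimage_subset]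
  rintro B ⟨_ | l, x⟩ hx
  · show f.1 x ∈ v.cl B
    by_cases hlim : x ∈ UpperLim u le fun l => (F l).1 ⁻¹' B
    · exact hF B hlim
    obtain ⟨l₀, U₀, hU₀, hdisj⟩ : ∃ l₀ U₀, u.Nhd x U₀ ∧
        ∀ l, le l₀ l → ¬((F l).1 ⁻¹' B ∩ U₀).Nonempty := by
      simpa [UpperLim] using hlim
    have hslice := mem_cl_of_mem_prod_cl hx (withLimit_nhd_none h l₀)
    have hsplit : {x' | ∃ z' ∈ insert none (some '' {l | le l₀ l}), (z', x') ∈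
        (fun p : Option Λ × X => (p.1.elim f F).1 p.2) ⁻¹' B} ⊆ f.1 ⁻¹' B ∪ U₀ᶜ := by
      rintro x' ⟨_, rfl | ⟨l, hl, rfl⟩, hB⟩
      · exact Or.inl hB
      · exact Or.inr fun hx'U => hdisj l hl ⟨x', hB, hx'U⟩
    have hfx := cl_mono u hsplit hslice
    rw [u.cl_union] at hfx
    exact (continuous_iff_cl_preimage_subset _).1 f.2 B (hfx.resolve_right hU₀)
  · have hslice := mem_cl_of_mem_prod_cl hx (withLimit_nhd_some h l)
    refine (continuous_iff_cl_preimage_subset _).1 (F l).2 B (cl_mono u ?_ hslice)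
    rintro x' ⟨_, rfl, hB⟩
    exact hB

theorem mem_closure_of_proper {u : CechClosure X} {v : CechClosure Y}
    {t : TopologicalSpace (ContMap u v)} (ht : Proper u v (ofTop t)) {Λ : Type u}
    {le : Λ → Λ → Prop} (h : IsDirectedOrder le) {F : Λ → ContMap u v} {f : ContMap u v}
    (hF : ∀ B : Set Y, UpperLim u le (fun l => (F l).1 ⁻¹' B) ⊆ f.1 ⁻¹' v.cl B)
    {p : Λ → Prop} (hp : Cofinally le p) : f ∈ closure[t] (F '' {l | p l}) := by
  have := ht (Option Λ) (withLimit h) (fun z => z.elim f F) (continuous_withLimit_prod h hF) (some '' {l | p l})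
    ⟨none, none_mem_withLimit_cl h hp, rfl⟩
  rwa [image_image] at this

theorem mem_tau_of_proper {u : CechClosure X} {v : CechClosure Y}
    {t : TopologicalSpace (ContMap u v)} (ht : Proper u v (ofTop t)) {G : Set (ContMap u v)}
    (hG : IsOpen[t] G) : G ∈ tau u v := by
  intro f hf Λ le h F hF
  by_contra hres
  have hcof : Cofinally le fun l => F l ∉ G := by simpa [Cofinally] using hres
  let := t
  exact closure_minimal (image_subset_iff.2 fun _ => id) hG.isClosed_compl
    (mem_closure_of_proper ht h hF hcof) hf

/-- `τ` is a topology on `Y^X`; it (i.e. its Kuratowski closure operator) is proper, and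
every proper topology on `Y^X` is coarser than `τ`; consequently a subset `G` of `Y^X` is
open in the finest proper topology (the topology generated by `τ`, which is `τ` itself)
iff `G ∈ τ`. -/
theorem tau_is_finest_proper_topology (u : CechClosure X) (v : CechClosure Y) :
    -- `τ` is a topology:
    (Set.univ ∈ tau u v) ∧
    (∀ G₁ ∈ tau u v, ∀ G₂ ∈ tau u v, G₁ ∩ G₂ ∈ tau u v) ∧
    (∀ 𝒢 ⊆ tau u v, ⋃₀ 𝒢 ∈ tau u v) ∧
    -- `τ` is proper:
    Proper u v (ofTop (TopologicalSpace.generateFrom (tau u v))) ∧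
    -- every proper topology is coarser than `τ`:
    (∀ t : TopologicalSpace (ContMap u v), Proper u v (ofTop t) →
      ∀ G : Set (ContMap u v), t.IsOpen G → G ∈ tau u v) ∧
    -- a set is open in the finest proper topology iff it belongs to `τ`:
    (∀ G : Set (ContMap u v),
      (TopologicalSpace.generateFrom (tau u v)).IsOpen G ↔ G ∈ tau u v) :=
  ⟨univ_mem_tau u v, fun _ h₁ _ h₂ => inter_mem_tau h₁ h₂, fun _ => sUnion_mem_tau,
    proper_tau u v, fun _ ht _ => mem_tau_of_proper ht, isOpen_generateFrom_tau_iff⟩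

end CechClosure
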